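/- If A ⊆ (Z/3Z)^n contains no three-term arithmetic progression (i.e., no solutions to a + c = 2b with a, b, c not all equal), then |A| ≤ 3·m_{2n/3}, where m_{2n/3} is the number of monomials in n variables with each exponent in {0,1,2} and total degree at most 2n/3. -/

import Mathlib

/-!
In `(ZMod 3)ⁿ` the product `T a b c = ∏ᵢ (1 - (aᵢ + bᵢ + cᵢ)²)` is the indicator of
`a + b + c = 0`. Expanding it gives a sum of products `a^α b^β c^γ` of reduced monomials with
`deg α + deg β + deg γ ≤ 2n`, so in each term one of the three degrees is at most `2n/3`.
Let `S` be the set of these low-degree exponents. The weights `w : A → ZMod 3` annihilating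
every monomial `c ↦ c^γ` with `γ ∈ S` form a space of dimension at least `|A| - |S|`, and it
contains some `w` whose support is at least that large. Contracting `T` against such a `w`
kills the terms with `γ ∈ S` and leaves a matrix of rank at most `2|S|`; when `A` has no
three-term progression that matrix is `diag w`, whose rank is the size of the support of `w`.
Hence `|A| - |S| ≤ 2|S|`.
-/

open Finset

namespace Matrix

variable {m n ι K : Type*} [Fintype n] [Field K]

theorem rank_add_le (A B : Matrix m n K) : (A + B).rank ≤ A.rank + B.rank := by
  unfold rank
  rw [mulVecLin_add]
  exact (Submodule.finrank_mono (LinearMap.range_add_le _ _)).trans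
    (Submodule.finrank_add_le_finrank_add_finrank _ _)

theorem rank_le_card_of_eq_sum_mul (M : Matrix m n K) (S : Finset ι) (u : ι → m → K)
    (v : ι → n → K) (hM : ∀ a b, M a b = ∑ s ∈ S, u s a * v s b) : M.rank ≤ #S := by
  have : M = (of fun a (s : S) => u s a) * of fun (s : S) b => v s b := by
    ext a b
    rw [hM, mul_apply, ← sum_coe_sort S]
    rfl
  rw [this]
  exact (rank_mul_le_left _ _).trans ((rank_le_card_width _).trans_eq (Fintype.card_coe S))

theorem rank_of_contraction_le {α β γ G ι₁ ι₂ ι₃ : Type*} [Fintype β] [Fintype γ] [Fintype G]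
    [DecidableEq ι₁] [DecidableEq ι₂] (C : G → K) (p₁ : G → ι₁) (p₂ : G → ι₂) (p₃ : G → ι₃)
    (f₁ : ι₁ → α → K) (f₂ : ι₂ → β → K) (f₃ : ι₃ → γ → K)
    (S₁ : Finset ι₁) (S₂ : Finset ι₂) (S₃ : Finset ι₃)
    (hS : ∀ g, C g ≠ 0 → p₁ g ∈ S₁ ∨ p₂ g ∈ S₂ ∨ p₃ g ∈ S₃)
    (w : γ → K) (hw : ∀ k ∈ S₃, ∑ c, w c * f₃ k c = 0) :
    (of fun a b => ∑ c, w c *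
      ∑ g, C g * f₁ (p₁ g) a * f₂ (p₂ g) b * f₃ (p₃ g) c).rank ≤ #S₁ + #S₂ := by
  set F : G → K := fun g => C g * ∑ c, w c * f₃ (p₃ g) c
  have hF : ∀ g, p₁ g ∉ S₁ → p₂ g ∉ S₂ → F g = 0 := by
    intro g h₁ h₂
    by_cases hC : C g = 0
    · simp [F, hC]
    · simp [F, hw _ (((hS g hC).resolve_left h₁).resolve_left h₂)]
  set G₁ := univ.filter fun g => p₁ g ∈ S₁
  set G₂ := univ.filter fun g => p₁ g ∉ S₁ ∧ p₂ g ∈ S₂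
  have hM : (of fun a b => ∑ c, w c * ∑ g, C g * f₁ (p₁ g) a * f₂ (p₂ g) b * f₃ (p₃ g) c) =
      of (fun a b => ∑ g ∈ G₁, F g * f₁ (p₁ g) a * f₂ (p₂ g) b) +
        of fun a b => ∑ g ∈ G₂, F g * f₁ (p₁ g) a * f₂ (p₂ g) b := by
    ext a b
    have hcontract : ∑ c, w c * ∑ g, C g * f₁ (p₁ g) a * f₂ (p₂ g) b * f₃ (p₃ g) c =
        ∑ g, F g * f₁ (p₁ g) a * f₂ (p₂ g) b := by
      simp only [F, mul_sum, sum_mul]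
      rw [sum_comm]
      exact sum_congr rfl fun g _ => sum_congr rfl fun c _ => by ring
    rw [add_apply, of_apply, of_apply, of_apply, hcontract,
      ← sum_filter_add_sum_filter_not univ (fun g => p₁ g ∈ S₁),
      ← sum_filter_add_sum_filter_not (univ.filter fun g => p₁ g ∉ S₁) (fun g => p₂ g ∈ S₂),
      filter_filter, sum_eq_zero (s := filter _ (filter _ _)), add_zero]
    intro g hg
    simp only [mem_filter, mem_univ, true_and] at hg
    simp [hF g hg.1 hg.2]
  rw [hM]
  refine (rank_add_le _ _).trans (add_le_add ?_ ?_)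
  · refine rank_le_card_of_eq_sum_mul _ S₁ f₁
      (fun s b => ∑ g ∈ G₁ with p₁ g = s, F g * f₂ (p₂ g) b) fun a b => ?_
    rw [of_apply, ← sum_fiberwise_of_maps_to (g := p₁) (t := S₁)
      fun g hg => (mem_filter.mp hg).2]
    refine sum_congr rfl fun s _ => ?_
    rw [mul_sum]
    refine sum_congr rfl fun g hg => ?_
    rw [(mem_filter.mp hg).2]
    ring
  · refine rank_le_card_of_eq_sum_mul _ S₂
      (fun s a => ∑ g ∈ G₂ with p₂ g = s, F g * f₁ (p₁ g) a) f₂ fun a b => ?_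
    rw [of_apply, ← sum_fiberwise_of_maps_to (g := p₂) (t := S₂)
      fun g hg => (mem_filter.mp hg).2.2]
    refine sum_congr rfl fun s _ => ?_
    rw [sum_mul]
    refine sum_congr rfl fun g hg => ?_
    rw [(mem_filter.mp hg).2]

end Matrix

namespace Submodule

variable {ι K : Type*} [Fintype ι] [DecidableEq ι] [Field K]

def restrictCoords (V : Submodule K (ι → K)) (B : Finset ι) : V →ₗ[K] (B → K) :=
  LinearMap.funLeft K K ((↑) : B → ι) ∘ₗ V.subtype

theorem exists_restrictCoords_bijective (V : Submodule K (ι → K)) :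
    ∃ B, Function.Bijective (V.restrictCoords B) := by
  classical
  obtain ⟨B, hB, hmax⟩ := exists_max_image
    (univ.filter fun B : Finset ι => Function.Surjective (V.restrictCoords B)) card
    ⟨∅, mem_filter.mpr ⟨mem_univ _, fun _ => ⟨0, Subsingleton.elim _ _⟩⟩⟩
  replace hB : Function.Surjective (V.restrictCoords B) := (mem_filter.mp hB).2
  refine ⟨B, ?_, hB⟩
  rw [← LinearMap.ker_eq_bot, eq_bot_iff]
  intro v hv
  by_contra hv0
  obtain ⟨i, hi⟩ : ∃ i, (v : ι → K) i ≠ 0 := by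
    by_contra! h
    exact hv0 ((mem_bot K).mpr (Subtype.ext (funext h)))
  have hiB : i ∉ B := fun hiB => hi (congrFun (LinearMap.mem_ker.mp hv) ⟨i, hiB⟩)
  -- Moving a preimage along `v` reaches any prescribed value at the new coordinate `i`.
  have hsurj : Function.Surjective (V.restrictCoords (insert i B)) := by
    intro y
    obtain ⟨u, hu⟩ := hB fun j => y ⟨j, mem_insert_of_mem j.2⟩
    refine ⟨u + ((y ⟨i, mem_insert_self i B⟩ - (u : ι → K) i) / (v : ι → K) i) • v, ?_⟩
    funext ⟨j, hj⟩
    have huj := fun hjB : j ∈ B => congrFun hu ⟨j, hjB⟩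
    have hvj := fun hjB : j ∈ B => congrFun (LinearMap.mem_ker.mp hv) ⟨j, hjB⟩
    simp only [restrictCoords, LinearMap.coe_comp, Function.comp_apply, LinearMap.funLeft_apply,
      subtype_apply, coe_add, coe_smul, Pi.add_apply, Pi.smul_apply, smul_eq_mul,
      Pi.zero_apply] at huj hvj ⊢
    rcases mem_insert.mp hj with rfl | hjB
    · field_simp
      ring
    · rw [huj hjB, hvj hjB, mul_zero, add_zero]
  have := hmax _ (mem_filter.mpr ⟨mem_univ _, hsurj⟩)
  rw [card_insert_of_notMem hiB] at this
  omega

theorem exists_mem_finrank_le_card_support [DecidableEq K] (V : Submodule K (ι → K)) :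
    ∃ v ∈ V, Module.finrank K V ≤ Fintype.card {i // v i ≠ 0} := by
  obtain ⟨B, hB⟩ := V.exists_restrictCoords_bijective
  obtain ⟨v, hv⟩ := hB.2 1
  refine ⟨v, v.2, ?_⟩
  rw [(LinearEquiv.ofBijective _ hB).finrank_eq, Module.finrank_pi, Fintype.card_coe,
    Fintype.card_subtype]
  refine card_le_card fun j hj => mem_filter.mpr ⟨mem_univ j, ?_⟩
  have hvj : (v : ι → K) j = 1 := congrFun hv ⟨j, hj⟩
  simp [hvj]

end Submodule

namespace CapSet

theorem add_eq_two_smul_iff_add_add_eq_zero {ι : Type*} (a b c : ι → ZMod 3) :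
    a + c = (2 : ZMod 3) • b ↔ a + b + c = 0 := by
  simp only [funext_iff, Pi.add_apply, Pi.smul_apply, smul_eq_mul, Pi.zero_apply]
  refine forall_congr' fun i => ?_
  generalize a i = x, b i = y, c i = z
  revert x y z
  decide

variable {ι : Type*} [Fintype ι]

theorem prod_one_sub_sq_add_add (a b c : ι → ZMod 3) :
    ∏ i, (1 - (a i + b i + c i) ^ 2) = if a + b + c = 0 then 1 else 0 := by
  have h : ∀ x : ZMod 3, 1 - x ^ 2 = if x = 0 then 1 else 0 := by decide
  simp only [h, Fintype.prod_boole, funext_iff, Pi.add_apply, Pi.zero_apply]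

def evalMonomial (α : ι → Fin 3) (x : ι → ZMod 3) : ZMod 3 :=
  ∏ i, x i ^ (α i : ℕ)

def degree (α : ι → Fin 3) : ℕ :=
  ∑ i, (α i : ℕ)

/-- Over `ZMod 3`, `1 - (x + y + z) ^ 2 = 1 + 2x² + 2y² + 2z² + xy + xz + yz`. -/
def coeffOneSubSq : Fin 3 × Fin 3 × Fin 3 → ZMod 3
  | (0, 0, 0) => 1
  | (2, 0, 0) => 2
  | (0, 2, 0) => 2
  | (0, 0, 2) => 2
  | (1, 1, 0) => 1
  | (1, 0, 1) => 1
  | (0, 1, 1) => 1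
  | _ => 0

theorem one_sub_sq_add_add_eq_sum (x y z : ZMod 3) :
    1 - (x + y + z) ^ 2 = ∑ t : Fin 3 × Fin 3 × Fin 3,
      coeffOneSubSq t * x ^ (t.1 : ℕ) * y ^ (t.2.1 : ℕ) * z ^ (t.2.2 : ℕ) := by
  revert x y z
  decide

theorem sum_le_two_of_coeffOneSubSq_ne_zero :
    ∀ t, coeffOneSubSq t ≠ 0 → (t.1 : ℕ) + t.2.1 + t.2.2 ≤ 2 := by
  decide

theorem prod_one_sub_sq_add_add_eq_sum [DecidableEq ι] (a b c : ι → ZMod 3) :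
    ∏ i, (1 - (a i + b i + c i) ^ 2) = ∑ g : ι → Fin 3 × Fin 3 × Fin 3,
      (∏ i, coeffOneSubSq (g i)) * evalMonomial (fun i => (g i).1) a *
        evalMonomial (fun i => (g i).2.1) b * evalMonomial (fun i => (g i).2.2) c := by
  simp only [one_sub_sq_add_add_eq_sum, prod_univ_sum, Fintype.piFinset_univ, evalMonomial,
    ← prod_mul_distrib]

theorem degree_add_le_of_prod_coeffOneSubSq_ne_zero (g : ι → Fin 3 × Fin 3 × Fin 3)
    (hg : ∏ i, coeffOneSubSq (g i) ≠ 0) :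
    degree (fun i => (g i).1) + degree (fun i => (g i).2.1) + degree (fun i => (g i).2.2) ≤
      2 * Fintype.card ι := by
  simp only [degree, ← sum_add_distrib]
  calc _ ≤ ∑ _i : ι, 2 := sum_le_sum fun i _ =>
        sum_le_two_of_coeffOneSubSq_ne_zero _ (prod_ne_zero_iff.mp hg i (mem_univ i))
    _ = 2 * Fintype.card ι := by rw [sum_const, card_univ, smul_eq_mul, mul_comm]

theorem diagonal_eq_of_forall_add_add_eq_zero {A : Finset (ι → ZMod 3)}
    (hA : ∀ a ∈ A, ∀ b ∈ A, ∀ c ∈ A, a + b + c = 0 → a = b ∧ b = c) (w : A → ZMod 3) :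
    Matrix.diagonal w = Matrix.of fun a b : A => ∑ c : A, w c *
      ∏ i, (1 - ((a : ι → ZMod 3) i + (b : ι → ZMod 3) i + (c : ι → ZMod 3) i) ^ 2) := by
  have hthree : ∀ x : ι → ZMod 3, x + x + x = 0 := fun x =>
    funext fun i => (by decide : ∀ y : ZMod 3, y + y + y = 0) (x i)
  have hiff : ∀ a b c : A, (a : ι → ZMod 3) + b + c = 0 ↔ a = b ∧ c = a := by
    intro a b c
    refine ⟨fun h => ?_, ?_⟩
    · obtain ⟨hab, hbc⟩ := hA a a.2 b b.2 c c.2 h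
      exact ⟨Subtype.ext hab, Subtype.ext (hab.trans hbc).symm⟩
    · rintro ⟨rfl, rfl⟩
      exact hthree _
  ext a b
  simp only [prod_one_sub_sq_add_add, Matrix.diagonal_apply, Matrix.of_apply, mul_ite, mul_one,
    mul_zero, hiff]
  by_cases hab : a = b <;> simp [hab]

variable [DecidableEq ι]

def lowDegreeExponents (ι : Type*) [Fintype ι] [DecidableEq ι] : Finset (ι → Fin 3) :=
  univ.filter fun α => 3 * degree α ≤ 2 * Fintype.card ι

theorem card_support_le_of_forall_sum_mul_evalMonomial_eq_zero {A : Finset (ι → ZMod 3)}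
    (hA : ∀ a ∈ A, ∀ b ∈ A, ∀ c ∈ A, a + b + c = 0 → a = b ∧ b = c) (w : A → ZMod 3)
    (hw : ∀ γ ∈ lowDegreeExponents ι, ∑ c : A, w c * evalMonomial γ (c : ι → ZMod 3) = 0) :
    Fintype.card {c // w c ≠ 0} ≤ 2 * #(lowDegreeExponents ι) := by
  rw [← Matrix.rank_diagonal, diagonal_eq_of_forall_add_add_eq_zero hA]
  simp only [prod_one_sub_sq_add_add_eq_sum]
  let e : (ι → Fin 3) → A → ZMod 3 := fun α c => evalMonomial α c
  refine (Matrix.rank_of_contraction_le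
    (fun g : ι → Fin 3 × Fin 3 × Fin 3 => ∏ i, coeffOneSubSq (g i))
    (fun g i => (g i).1) (fun g i => (g i).2.1) (fun g i => (g i).2.2) e e e
    (lowDegreeExponents ι) (lowDegreeExponents ι) (lowDegreeExponents ι)
    (fun g hg => ?_) w hw).trans_eq (two_mul _).symm
  have := degree_add_le_of_prod_coeffOneSubSq_ne_zero g hg
  simp only [lowDegreeExponents, mem_filter, mem_univ, true_and]
  omega

theorem card_le_three_mul_card_lowDegreeExponents (A : Finset (ι → ZMod 3))
    (hA : ∀ a ∈ A, ∀ b ∈ A, ∀ c ∈ A, a + b + c = 0 → a = b ∧ b = c) :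
    #A ≤ 3 * #(lowDegreeExponents ι) := by
  let Φ : (A → ZMod 3) →ₗ[ZMod 3] (lowDegreeExponents ι → ZMod 3) :=
    (Matrix.of fun (γ : lowDegreeExponents ι) (c : A) => evalMonomial γ (c : ι → ZMod 3)).mulVecLin
  obtain ⟨w, hw, hsupp⟩ := (LinearMap.ker Φ).exists_mem_finrank_le_card_support
  have hrank : #A ≤ #(lowDegreeExponents ι) + Module.finrank (ZMod 3) (LinearMap.ker Φ) := by
    have := Φ.finrank_range_add_finrank_ker
    have := Submodule.finrank_le (LinearMap.range Φ)
    simp only [Module.finrank_pi, Fintype.card_coe] at *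
    omega
  have hΦw : ∀ γ ∈ lowDegreeExponents ι, ∑ c : A, w c * evalMonomial γ (c : ι → ZMod 3) = 0 :=
    fun γ hγ => by
      simpa [Φ, Matrix.mulVec, dotProduct, mul_comm] using
        congrFun (LinearMap.mem_ker.mp hw) ⟨γ, hγ⟩
  have := card_support_le_of_forall_sum_mul_evalMonomial_eq_zero hA w hΦw
  omega

end CapSet

theorem stmt_14_general (n : ℕ) (A : Finset (Fin n → ZMod 3))
    (hA : ∀ a ∈ A, ∀ b ∈ A, ∀ c ∈ A, a + c = (2 : ZMod 3) • b → a = b ∧ b = c) :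
    A.card ≤ 3 * (Finset.univ.filter (fun m : Fin n → Fin 3 =>
      3 * ∑ i, (m i : ℕ) ≤ 2 * n)).card := by
  have := CapSet.card_le_three_mul_card_lowDegreeExponents A fun a ha b hb c hc h =>
    hA a ha b hb c hc ((CapSet.add_eq_two_smul_iff_add_add_eq_zero a b c).mpr h)
  rwa [CapSet.lowDegreeExponents, Fintype.card_fin] at this

/-- If `A ⊆ (ℤ/3ℤ)^n` contains no three-term arithmetic progression (no solutions of
`a + c = 2b` with `a, b, c` not all equal), then `|A| ≤ 3 * m_{2n/3}`, where `m_{2n/3}`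
is the number of monomials in `n` variables with exponents in `{0,1,2}` and total degree
at most `2n/3`. -/
theorem stmt_14 (n : ℕ) (hn : 0 < n) (A : Finset (Fin n → ZMod 3))
    (hA : ∀ a ∈ A, ∀ b ∈ A, ∀ c ∈ A, a + c = (2 : ZMod 3) • b → a = b ∧ b = c) :
    A.card ≤ 3 * (Finset.univ.filter (fun m : Fin n → Fin 3 =>
      3 * ∑ i, (m i : ℕ) ≤ 2 * n)).card :=
  stmt_14_general n A hA
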